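/- Let k ≥ 1 and n = 5(2k+1), and let ρ_0,…,ρ_{n−1} denote the rows of the matrix Z_n. Then ∑_{j=0}^{2k} (ρ_{5j} + ρ_{5j+3} − ρ_{5j+4}) = 0 (the zero vector in ℂ^n), and consequently the rank of Z_n over ℂ is at most n − 2. -/

import Mathlib

open BigOperators Matrix

/-- Rows `r_0,…,r_4` of `Z_n`:
`r_0 = (0, 1^{(n−1)/2}, (−1)^{(n−1)/2})`,
`r_1 = (−1, 0, 2, 2, 1^{(n−7)/2}, (−1)^{(n−1)/2})`,
`r_2 = (−1, −2, 0, 2, 1^{(n−3)/2}, (−1)^{(n−5)/2})`,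
`r_3 = (−1, −2, −2, 0, 1^{(n+1)/2}, (−1)^{(n−9)/2})`,
`r_4 = (−1, −1, −1, −1, 0, 1^{(n−1)/2}, (−1)^{(n−9)/2})`. -/
def zRow (n s t : ℕ) : ℂ :=
  match s with
  | 0 => if t = 0 then 0 else if t ≤ (n - 1) / 2 then 1 else -1
  | 1 => if t = 0 then -1 else if t = 1 then 0 else if t ≤ 3 then 2
         else if t ≤ (n - 1) / 2 then 1 else -1
  | 2 => if t = 0 then -1 else if t = 1 then -2 else if t = 2 then 0 else if t = 3 then 2
         else if t ≤ (n + 3) / 2 then 1 else -1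
  | 3 => if t = 0 then -1 else if t ≤ 2 then -2 else if t = 3 then 0
         else if t ≤ (n + 7) / 2 then 1 else -1
  | _ => if t ≤ 3 then -1 else if t = 4 then 0 else if t ≤ (n + 7) / 2 then 1 else -1

/-- The matrix `Z_n` (for `n = 5(2k+1)`): rows `r_0,…,r_4` as above and
`r_i = T⁵(r_{i−5})` for `5 ≤ i ≤ n−1`. -/
def Zmat (n : ℕ) : Matrix (Fin n) (Fin n) ℂ :=
  Matrix.of fun i j => zRow n (i.val % 5) ((j.val + n - (i.val - i.val % 5)) % n)

/-!
`Z_n` is block circulant with `5 × 5` blocks: writing `N = 2k + 1`, the entry in row `5j + s`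
and column `5q + c` is `r_s(c + 5((q - j) mod N))`. So for a weight vector `w` on `Fin 5`, the
combination `∑ᵢ w_{i mod 5} ρ_i` has in column `5q + c` the residue-class sum
`∑_{m < N} ∑_s w_s r_s(c + 5m)`, independent of `q`. Along each residue class mod 5,
`r_0 + r_3 - r_4` and `r_1 + r_3` are step functions with one jump near `(n - 1)/2` and
exceptional values only at the first term and just after the jump; these balance, so both
residue-class sums vanish. This gives the relation of the statement together with
`∑_j (ρ_{5j+1} + ρ_{5j+3}) = 0`, two independent vectors in the left kernel of `Z_n`.
-/

open Finset

theorem Finset.sum_range_eq_of_four_pieces {M : Type*} [AddCommMonoid M] (f : ℕ → M)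
    {N K L : ℕ} {a b c d : M} (hN : K + L + 2 = N) (h0 : f 0 = a)
    (h1 : ∀ m, 0 < m → m ≤ K → f m = b) (h2 : f (K + 1) = c)
    (h3 : ∀ m, K + 1 < m → m < N → f m = d) :
    ∑ m ∈ range N, f m = a + K • b + c + L • d := by
  have hb : ∑ m ∈ range K, f (m + 1) = K • b := by
    rw [sum_congr rfl fun m hm => h1 (m + 1) m.succ_pos (by simpa using hm),
      sum_const, card_range]
  have hd : ∑ m ∈ Ico (K + 2) N, f m = L • d := by
    rw [sum_congr rfl fun m hm => h3 m (by simp at hm; omega) (by simp at hm; omega),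
      sum_const, Nat.card_Ico, show N - (K + 2) = L by omega]
  rw [← sum_range_add_sum_Ico f (show K + 2 ≤ N by omega), sum_range_succ, sum_range_succ', hb,
    hd, h0, h2, add_comm (K • b) a]

theorem Matrix.rank_le_card_sub_of_vecMul_eq_zero {ι m n R : Type*} [Field R] [Fintype ι]
    [Fintype m] [Fintype n] {B : Matrix m n R} {v : ι → m → R} (hv : LinearIndependent R v)
    (hB : ∀ i, v i ᵥ* B = 0) : B.rank ≤ Fintype.card m - Fintype.card ι := by
  have hvB : Matrix.of v * B = 0 := by
    funext i
    exact hB i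
  have := rank_add_rank_le_card_of_mul_eq_zero hvB
  rw [LinearIndependent.rank_matrix (M := Matrix.of v) hv] at this
  omega

section BlockCirculant

def blockEquiv (N : ℕ) : Fin N × Fin 5 ≃ Fin (5 * N) :=
  finProdFinEquiv.trans (finCongr (Nat.mul_comm N 5))

variable {N : ℕ}

@[simp]
theorem blockEquiv_val (j : Fin N) (s : Fin 5) :
    (blockEquiv N (j, s) : ℕ) = s + 5 * j := by
  simp [blockEquiv]

def periodicVec (w : Fin 5 → ℂ) : Fin (5 * N) → ℂ :=
  fun i => w ((blockEquiv N).symm i).2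

@[simp]
theorem periodicVec_blockEquiv (w : Fin 5 → ℂ) (j : Fin N) (s : Fin 5) :
    periodicVec w (blockEquiv N (j, s)) = w s := by
  simp [periodicVec]

theorem periodicVec_vecMul (w : Fin 5 → ℂ) (A : Matrix (Fin (5 * N)) (Fin (5 * N)) ℂ) :
    periodicVec w ᵥ* A = ∑ j, ∑ s, w s • A (blockEquiv N (j, s)) := by
  rw [vecMul_eq_sum, ← (blockEquiv N).sum_comp, Fintype.sum_prod_type]
  simp

theorem Zmat_apply_blockEquiv (j q : Fin N) (s c : Fin 5) :
    Zmat (5 * N) (blockEquiv N (j, s)) (blockEquiv N (q, c)) =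
      zRow (5 * N) s (c + 5 * (q - j : Fin N)) := by
  have hj := j.isLt
  have hc := c.isLt
  have hs := s.isLt
  simp only [Zmat, of_apply, blockEquiv_val, Fin.val_sub]
  rw [show (s + 5 * j : ℕ) % 5 = s by omega,
    show (c + 5 * q + 5 * N - (s + 5 * j - s) : ℕ) = c + 5 * (N - j + q) by omega, Nat.mod_mul,
    show (c + 5 * (N - j + q) : ℕ) % 5 = c by omega,
    show (c + 5 * (N - j + q) : ℕ) / 5 = N - j + q by omega]

variable [NeZero N]

theorem periodicVec_vecMul_Zmat_apply (w : Fin 5 → ℂ) (q : Fin N) (c : Fin 5) :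
    (periodicVec w ᵥ* Zmat (5 * N)) (blockEquiv N (q, c)) =
      ∑ m ∈ range N, ∑ s, w s * zRow (5 * N) s (c + 5 * m) := by
  simp only [periodicVec_vecMul, Finset.sum_apply, Pi.smul_apply, smul_eq_mul,
    Zmat_apply_blockEquiv]
  rw [← Fin.sum_univ_eq_sum_range (fun m => ∑ s, w s * zRow (5 * N) s (c + 5 * m))]
  -- the block index `j` enters only through `q - j`, and `j ↦ q - j` permutes `Fin N`
  exact Fintype.sum_equiv (Equiv.subLeft q) _ _ fun j => rfl

theorem periodicVec_vecMul_Zmat_eq_zero {w : Fin 5 → ℂ}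
    (hw : ∀ c : Fin 5, ∑ m ∈ range N, ∑ s, w s * zRow (5 * N) s (c + 5 * m) = 0) :
    periodicVec w ᵥ* Zmat (5 * N) = 0 := by
  funext i
  obtain ⟨⟨q, c⟩, rfl⟩ := (blockEquiv N).surjective i
  rw [periodicVec_vecMul_Zmat_apply, hw, Pi.zero_apply]

end BlockCirculant

section ResidueSums

variable {k : ℕ}

theorem zRow_zero_add_three_sub_four (hk : 1 ≤ k) (u : ℕ) :
    zRow (5 * (2 * k + 1)) 0 u + zRow (5 * (2 * k + 1)) 3 u - zRow (5 * (2 * k + 1)) 4 u =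
      if u ≤ 2 then 0 else if u ≤ 4 then 2 else if u ≤ 5 * k + 2 then 1 else -1 := by
  simp only [zRow]
  rw [show (5 * (2 * k + 1) - 1) / 2 = 5 * k + 2 by omega,
    show (5 * (2 * k + 1) + 7) / 2 = 5 * k + 6 by omega]
  split_ifs <;> first | omega | norm_num

theorem zRow_one_add_three (hk : 1 ≤ k) (u : ℕ) :
    zRow (5 * (2 * k + 1)) 1 u + zRow (5 * (2 * k + 1)) 3 u =
      if u ≤ 1 then -2 else if u = 2 then 0 else if u ≤ 5 * k + 2 then 2
      else if u ≤ 5 * k + 6 then 0 else -2 := by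
  simp only [zRow]
  rw [show (5 * (2 * k + 1) - 1) / 2 = 5 * k + 2 by omega,
    show (5 * (2 * k + 1) + 7) / 2 = 5 * k + 6 by omega]
  split_ifs <;> first | omega | norm_num

theorem sum_residue_zRow_zero_add_three_sub_four (hk : 1 ≤ k) {c : ℕ} (hc : c < 5) :
    ∑ m ∈ range (2 * k + 1), (zRow (5 * (2 * k + 1)) 0 (c + 5 * m)
      + zRow (5 * (2 * k + 1)) 3 (c + 5 * m) - zRow (5 * (2 * k + 1)) 4 (c + 5 * m)) = 0 := by
  simp only [zRow_zero_add_three_sub_four hk]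
  rcases le_or_gt c 2 with hc2 | hc2
  · rw [sum_range_eq_of_four_pieces _ (K := k) (L := k - 1) (a := 0) (b := 1) (c := -1) (d := -1)
      (by omega)]
    · simp [Nat.cast_sub hk]; ring
    all_goals intros; split_ifs <;> first | rfl | omega
  · rw [sum_range_eq_of_four_pieces _ (K := k - 1) (L := k) (a := 2) (b := 1) (c := -1) (d := -1)
      (by omega)]
    · simp [Nat.cast_sub hk]; ring
    all_goals intros; split_ifs <;> first | rfl | omega

theorem sum_residue_zRow_one_add_three (hk : 1 ≤ k) {c : ℕ} (hc : c < 5) :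
    ∑ m ∈ range (2 * k + 1),
      (zRow (5 * (2 * k + 1)) 1 (c + 5 * m) + zRow (5 * (2 * k + 1)) 3 (c + 5 * m)) = 0 := by
  simp only [zRow_one_add_three hk]
  rcases lt_trichotomy c 2 with hc2 | rfl | hc2
  · rw [sum_range_eq_of_four_pieces _ (K := k) (L := k - 1) (a := -2) (b := 2) (c := 0) (d := -2)
      (by omega)]
    · simp [Nat.cast_sub hk]; ring
    all_goals intros; split_ifs <;> first | rfl | omega
  · rw [sum_range_eq_of_four_pieces _ (K := k) (L := k - 1) (a := 0) (b := 2) (c := -2) (d := -2)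
      (by omega)]
    · simp [Nat.cast_sub hk]; ring
    all_goals intros; split_ifs <;> first | rfl | omega
  · rw [sum_range_eq_of_four_pieces _ (K := k - 1) (L := k) (a := 2) (b := 2) (c := 0) (d := -2)
      (by omega)]
    · simp [Nat.cast_sub hk]; ring
    all_goals intros; split_ifs <;> first | rfl | omega

end ResidueSums

/-- For `n = 5(2k+1)`, the rows `ρ_0,…,ρ_{n−1}` of `Z_n`
satisfy `∑_{j=0}^{2k} (ρ_{5j} + ρ_{5j+3} − ρ_{5j+4}) = 0`, and consequently
`rank Z_n ≤ n − 2`. -/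
theorem Zmat_rows_relation_and_rank (k n : ℕ) (hk : 1 ≤ k)
    (hn : n = 5 * (2 * k + 1)) :
    (∑ j : Fin (2 * k + 1),
        (Zmat n ⟨5 * j.val, by have := j.isLt; omega⟩
          + Zmat n ⟨5 * j.val + 3, by have := j.isLt; omega⟩
          - Zmat n ⟨5 * j.val + 4, by have := j.isLt; omega⟩)) = 0 ∧
    (Zmat n).rank ≤ n - 2 := by
  subst hn
  have h034 : periodicVec ![1, 0, 0, 1, -1] ᵥ* Zmat (5 * (2 * k + 1)) = 0 :=
    periodicVec_vecMul_Zmat_eq_zero fun c => by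
      simpa [Fin.sum_univ_five, ← sub_eq_add_neg] using
        sum_residue_zRow_zero_add_three_sub_four hk c.isLt
  have h13 : periodicVec ![0, 1, 0, 1, 0] ᵥ* Zmat (5 * (2 * k + 1)) = 0 :=
    periodicVec_vecMul_Zmat_eq_zero fun c => by
      simpa [Fin.sum_univ_five] using sum_residue_zRow_one_add_three hk c.isLt
  refine ⟨?_, ?_⟩
  · rw [← h034, periodicVec_vecMul]
    refine sum_congr rfl fun j _ => ?_
    simp only [sub_eq_add_neg, Fin.sum_univ_five, Fin.isValue, cons_val_zero, one_smul,
      cons_val_one, zero_smul, add_zero, Matrix.cons_val, neg_smul]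
    congr 3 <;> exact Fin.ext (by simp [add_comm])
  · have hli : LinearIndependent ℂ
        ![periodicVec (N := 2 * k + 1) ![1, 0, 0, 1, -1], periodicVec ![0, 1, 0, 1, 0]] := by
      refine LinearIndependent.pair_iff.2 fun a b hab => ?_
      have h0 := congrFun hab (blockEquiv _ (0, 0))
      have h1 := congrFun hab (blockEquiv _ (0, 1))
      simp only [Fin.isValue, Pi.add_apply, Pi.smul_apply, periodicVec_blockEquiv, cons_val_zero,
        smul_eq_mul, mul_one, mul_zero, add_zero, Pi.zero_apply, cons_val_one, zero_add] at h0 h1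
      exact ⟨h0, h1⟩
    simpa using rank_le_card_sub_of_vecMul_eq_zero hli (Fin.forall_fin_two.2 ⟨h034, h13⟩)
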